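/- Let μ be a finite positive Borel measure on ℝ with Borel transform m, let 0 ≤ η < 1 and let E ∈ ℝ. If liminf_{ε→0⁺} ε^{1−η} · Im m(E+iε) > 0, then γ_μ⁺(E) ≤ 2η/(2 − η). -/

import Mathlib

open MeasureTheory Filter Set

/-- `γ_μ⁺(E) = limsup_{ε→0⁺} log μ((E−ε,E+ε)) / log ε`. -/
noncomputable def gammaPlus (μ : Measure ℝ) (E : ℝ) : ℝ :=
  Filter.limsup (fun ε : ℝ => Real.log (μ (Set.Ioo (E - ε) (E + ε))).toReal / Real.log ε)
    (nhdsWithin 0 (Set.Ioi 0))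

/-- `γ_μ⁻(E) = liminf_{ε→0⁺} log μ((E−ε,E+ε)) / log ε`. -/
noncomputable def gammaMinus (μ : Measure ℝ) (E : ℝ) : ℝ :=
  Filter.liminf (fun ε : ℝ => Real.log (μ (Set.Ioo (E - ε) (E + ε))).toReal / Real.log ε)
    (nhdsWithin 0 (Set.Ioi 0))

/-- The Borel transform `m(z) = ∫ (x - z)⁻¹ dμ(x)` of a measure `μ` on `ℝ`. -/
noncomputable def borelTransform (μ : Measure ℝ) (z : ℂ) : ℂ :=
  ∫ x : ℝ, ((x : ℂ) - z)⁻¹ ∂μ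

open Topology

/-!
Since `Im m(E + iε) = ∫ ε / ((x - E)² + ε²) dμ`, splitting `ℝ` at `|x - E| = δ` gives
`ε · Im m(E + iε) ≤ μ(E - δ, E + δ) + (ε / δ)² μ(ℝ)`. Take `ε = δ ^ s` with `s > 2 / (2 - η)`:
then the hypothesis `Im m(E + iε) ≳ ε ^ (η - 1)` turns this into `δ ^ (s η) ≲ μ(E - δ, E + δ)`,
the error term `δ ^ (2 (s - 1))` being of smaller order. Hence `γ_μ⁺(E) ≤ s η`; let
`s ↓ 2 / (2 - η)`.
-/

lemma tendsto_rpow_nhdsGT_zero {p : ℝ} (hp : 0 < p) :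
    Tendsto (fun r : ℝ => r ^ p) (𝓝[>] 0) (𝓝[>] 0) := by
  refine tendsto_nhdsWithin_iff.2 ⟨?_, eventually_mem_nhdsWithin.mono fun r hr => ?_⟩
  · simpa [Real.zero_rpow hp.ne'] using
      (Real.continuousAt_rpow_const 0 p (Or.inr hp.le)).tendsto.mono_left nhdsWithin_le_nhds
  · exact Real.rpow_pos_of_pos hr p

lemma limsup_log_div_log_le_of_rpow_le {f : ℝ → ℝ} {C α M : ℝ} (hC : 0 < C)
    (hlow : ∀ᶠ r in 𝓝[>] 0, C * r ^ α ≤ f r) (hup : ∀ᶠ r in 𝓝[>] 0, f r ≤ M) :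
    limsup (fun r => Real.log (f r) / Real.log r) (𝓝[>] 0) ≤ α := by
  have hlog (k : ℝ) : Tendsto (fun r => k / Real.log r) (𝓝[>] 0) (𝓝 0) :=
    Real.tendsto_log_nhdsGT_zero.const_div_atBot k
  have hunit : ∀ᶠ r in 𝓝[>] (0 : ℝ), r ∈ Ioo 0 1 := Ioo_mem_nhdsGT one_pos
  have hle : ∀ᶠ r in 𝓝[>] 0, Real.log (f r) / Real.log r ≤ α + Real.log C / Real.log r := by
    filter_upwards [hlow, hunit] with r hr ⟨hr0, hr1⟩
    have hlogr := Real.log_neg hr0 hr1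
    have hlogf := Real.log_le_log (by positivity) hr
    rw [Real.log_mul hC.ne' (Real.rpow_pos_of_pos hr0 _).ne', Real.log_rpow hr0] at hlogf
    rw [div_le_iff_of_neg hlogr, add_mul, div_mul_cancel₀ _ hlogr.ne]
    linarith
  have hge : ∀ᶠ r in 𝓝[>] 0, Real.log M / Real.log r ≤ Real.log (f r) / Real.log r := by
    filter_upwards [hlow, hup, hunit] with r hr hrM ⟨hr0, hr1⟩
    exact div_le_div_of_nonpos_of_le (Real.log_neg hr0 hr1).le
      (Real.log_le_log ((by positivity : 0 < C * r ^ α).trans_le hr) hrM)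
  have hα : Tendsto (fun r => α + Real.log C / Real.log r) (𝓝[>] 0) (𝓝 α) := by
    simpa using (hlog _).const_add α
  calc limsup (fun r => Real.log (f r) / Real.log r) (𝓝[>] 0)
      ≤ limsup (fun r => α + Real.log C / Real.log r) (𝓝[>] 0) :=
        limsup_le_limsup hle ((hlog _).isBoundedUnder_ge.mono_ge hge).isCoboundedUnder_le
          hα.isBoundedUnder_le
    _ = α := hα.limsup_eq

lemma integrable_inv_ofReal_sub (μ : Measure ℝ) [IsFiniteMeasure μ] {z : ℂ} (hz : z.im ≠ 0) :
    Integrable (fun x : ℝ => ((x : ℂ) - z)⁻¹) μ := by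
  have hne (x : ℝ) : (x : ℂ) - z ≠ 0 := fun hx => hz (by simpa using congrArg Complex.im hx)
  refine Integrable.mono' (integrable_const |z.im|⁻¹)
    ((Complex.continuous_ofReal.sub continuous_const).inv₀ hne).aestronglyMeasurable
    (Eventually.of_forall fun x => ?_)
  rw [norm_inv]
  gcongr
  simpa using Complex.abs_im_le_norm ((x : ℂ) - z)

lemma borelTransform_im (μ : Measure ℝ) [IsFiniteMeasure μ] {z : ℂ} (hz : z.im ≠ 0) :
    (borelTransform μ z).im = ∫ x, z.im / ((x - z.re) ^ 2 + z.im ^ 2) ∂μ := by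
  rw [borelTransform, ← RCLike.im_to_complex, ← integral_im (integrable_inv_ofReal_sub μ hz)]
  congr 1 with x
  simp [Complex.normSq_apply]
  ring

lemma sq_div_sq_add_sq_le_indicator_add (a x ε : ℝ) {δ : ℝ} (hδ : 0 < δ) :
    ε ^ 2 / ((x - a) ^ 2 + ε ^ 2) ≤ (Ioo (a - δ) (a + δ)).indicator 1 x + (ε / δ) ^ 2 := by
  by_cases hx : x ∈ Ioo (a - δ) (a + δ)
  · rw [indicator_of_mem hx, Pi.one_apply]
    have : ε ^ 2 / ((x - a) ^ 2 + ε ^ 2) ≤ 1 :=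
      div_le_one_of_le₀ (le_add_of_nonneg_left (sq_nonneg _)) (by positivity)
    linarith [sq_nonneg (ε / δ)]
  · rw [indicator_of_notMem hx, zero_add, div_pow]
    have hxa : δ ^ 2 ≤ (x - a) ^ 2 := by
      rw [mem_Ioo, not_and_or, not_lt, not_lt] at hx
      rcases hx with hx | hx <;> nlinarith
    exact div_le_div_of_nonneg_left (sq_nonneg _) (by positivity) (by linarith [sq_nonneg ε])

lemma mul_im_borelTransform_le (μ : Measure ℝ) [IsFiniteMeasure μ] (E : ℝ) {ε δ : ℝ}
    (hε : 0 < ε) (hδ : 0 < δ) :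
    ε * (borelTransform μ (E + ε * Complex.I)).im
      ≤ μ.real (Ioo (E - δ) (E + δ)) + (ε / δ) ^ 2 * μ.real univ := by
  have hre : (E + ε * Complex.I).re = E := by simp
  have him : (E + ε * Complex.I).im = ε := by simp
  rw [borelTransform_im μ (him.symm ▸ hε.ne'), hre, him, ← integral_const_mul]
  have hind : Integrable ((Ioo (E - δ) (E + δ)).indicator 1) μ :=
    (integrable_const (1 : ℝ)).indicator measurableSet_Ioo
  have hint : Integrable (fun x => (Ioo (E - δ) (E + δ)).indicator 1 x + (ε / δ) ^ 2) μ :=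
    hind.add (integrable_const _)
  calc ∫ x, ε * (ε / ((x - E) ^ 2 + ε ^ 2)) ∂μ
      ≤ ∫ x, ((Ioo (E - δ) (E + δ)).indicator 1 x + (ε / δ) ^ 2) ∂μ := by
        refine integral_mono_of_nonneg (Eventually.of_forall fun x => by positivity) hint
          (Eventually.of_forall fun x => ?_)
        simpa only [← mul_div_assoc, ← sq] using sq_div_sq_add_sq_le_indicator_add E x ε hδ
    _ = μ.real (Ioo (E - δ) (E + δ)) + (ε / δ) ^ 2 * μ.real univ := by
        rw [integral_add hind (integrable_const _), integral_indicator_one measurableSet_Ioo,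
          integral_const, smul_eq_mul, mul_comm]

lemma eventually_rpow_le_measureReal_Ioo (μ : Measure ℝ) [IsFiniteMeasure μ] {η E c s : ℝ}
    (hc : 0 < c) (hs : 0 < s) (hsη : s * η < 2 * (s - 1))
    (hlow : ∀ᶠ ε : ℝ in 𝓝[>] 0, c ≤ ε ^ (1 - η) * (borelTransform μ (E + ε * Complex.I)).im) :
    ∀ᶠ r in 𝓝[>] 0, c / 2 * r ^ (s * η) ≤ μ.real (Ioo (E - r) (E + r)) := by
  have hsmall : ∀ᶠ r in 𝓝[>] 0, r ^ (2 * (s - 1) - s * η) * μ.real univ ≤ c / 2 := by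
    have := ((tendsto_rpow_nhdsGT_zero (sub_pos.2 hsη)).mono_right nhdsWithin_le_nhds).mul_const
      (μ.real univ)
    exact (zero_mul (μ.real univ) ▸ this).eventually_le_const (half_pos hc)
  filter_upwards [(tendsto_rpow_nhdsGT_zero hs).eventually hlow, hsmall, self_mem_nhdsWithin]
    with r hcr hr (hr0 : 0 < r)
  have hrs : r ^ (s * η) * (r ^ s) ^ (1 - η) = r ^ s := by
    rw [← Real.rpow_mul hr0.le, ← Real.rpow_add hr0]
    congr 1
    ring
  have hsq : (r ^ s / r) ^ 2 = r ^ (s * η) * r ^ (2 * (s - 1) - s * η) := by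
    rw [← Real.rpow_add hr0, ← Real.rpow_sub_one hr0.ne', ← Real.rpow_mul_natCast hr0.le]
    congr 1
    push_cast
    ring
  set y := (borelTransform μ (E + ↑(r ^ s) * Complex.I)).im
  have hmain : c * r ^ (s * η) ≤ r ^ s * y :=
    calc c * r ^ (s * η) ≤ r ^ (s * η) * ((r ^ s) ^ (1 - η) * y) := by
          rw [mul_comm c]
          exact mul_le_mul_of_nonneg_left hcr (by positivity)
      _ = r ^ s * y := by rw [← mul_assoc, hrs]
  have herror : (r ^ s / r) ^ 2 * μ.real univ ≤ c / 2 * r ^ (s * η) := by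
    rw [hsq, mul_assoc, mul_comm (c / 2)]
    exact mul_le_mul_of_nonneg_left hr (by positivity)
  linarith [mul_im_borelTransform_le μ E (Real.rpow_pos_of_pos hr0 s) hr0]

theorem stmt_2_general (μ : Measure ℝ) [IsFiniteMeasure μ] (η E : ℝ) (hη1 : η < 1)
    (h : 0 < Filter.liminf
      (fun ε : ℝ => ε ^ (1 - η) * (borelTransform μ (E + ε * Complex.I)).im)
      (nhdsWithin 0 (Set.Ioi 0))) :
    gammaPlus μ E ≤ 2 * η / (2 - η) := by
  have hbdd : IsBoundedUnder (· ≥ ·) (𝓝[>] 0)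
      fun ε : ℝ => ε ^ (1 - η) * (borelTransform μ (E + ε * Complex.I)).im := by
    -- otherwise the `liminf` would take its junk value `0`
    by_contra hb
    exact h.ne' (Real.liminf_of_not_isBoundedUnder hb)
  have hlow := (eventually_lt_of_lt_liminf (half_lt_self h) hbdd).mono fun _ => le_of_lt
  have hη2 : 0 < 2 - η := by linarith
  have hs₀ : 0 < 2 / (2 - η) := div_pos two_pos hη2
  have hbound (s : ℝ) (hs : s ∈ Ioi (2 / (2 - η))) : gammaPlus μ E ≤ s * η := by
    have hsη : s * η < 2 * (s - 1) := by linarith [(div_lt_iff₀ hη2).1 hs]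
    exact limsup_log_div_log_le_of_rpow_le (half_pos (half_pos h))
      (eventually_rpow_le_measureReal_Ioo μ (half_pos h) (hs₀.trans hs) hsη hlow)
      (Eventually.of_forall fun _ => measureReal_mono (subset_univ _))
  calc gammaPlus μ E ≤ 2 / (2 - η) * η :=
        ge_of_tendsto ((continuous_mul_const η).tendsto _ |>.mono_left nhdsWithin_le_nhds)
          (eventually_nhdsWithin_of_forall hbound)
    _ = 2 * η / (2 - η) := div_mul_eq_mul_div _ _ _

/-- If `liminf_{ε→0⁺} ε^{1−η} Im m(E+iε) > 0` then
`γ_μ⁺(E) ≤ 2η / (2 − η)`. -/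
theorem stmt_2 (μ : Measure ℝ) [IsFiniteMeasure μ] (η E : ℝ) (hη0 : 0 ≤ η) (hη1 : η < 1)
    (h : 0 < Filter.liminf
      (fun ε : ℝ => ε ^ (1 - η) * (borelTransform μ (E + ε * Complex.I)).im)
      (nhdsWithin 0 (Set.Ioi 0))) :
    gammaPlus μ E ≤ 2 * η / (2 - η) :=
  stmt_2_general μ η E hη1 h
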